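/- arXiv:1612.07563 — 5 statements merged into one kernel-verified Lean document; each statement's English description precedes it below -/
import Mathlib

section
/- Let α > 0 be a non-integer real number, let m = ⌈α⌉, let a ∈ ℝ, and let β > α - 1. Then for every x > a, the m-th derivative at x of the function y ↦ (1/Γ(m-α)) ∫_a^y (y - τ)^(m-α-1) (τ - a)^β dτ equals (Γ(β+1)/Γ(β-α+1)) · (x - a)^(β-α). (This is the left-sided Riemann–Liouville fractional derivative of order α of τ ↦ (τ-a)^β.) -/
/-!
For `u = m - α > 0` and `x > a`, the substitution `τ = y - (y - a) s` and Euler's Beta integral give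
`(1 / Γ u) ∫_a^y (y - τ)^(u-1) (τ - a)^β dτ = Γ(β+1) / Γ(u+β+1) · (y - a)^(u+β)` near `x`.
Differentiating `m` times multiplies by the falling factorial `(u+β)(u+β-1)⋯(β-α+1)`,
which equals `Γ(u+β+1) / Γ(β-α+1)`.
-/

open MeasureTheory Real Filter Topology

namespace Real

theorem integral_rpow_mul_one_sub_rpow {u v : ℝ} (hu : 0 < u) (hv : 0 < v) :
    ∫ s in (0 : ℝ)..1, s ^ (u - 1) * (1 - s) ^ (v - 1) = Gamma u * Gamma v / Gamma (u + v) := by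
  apply Complex.ofReal_injective
  have hbeta : Complex.betaIntegral u v = ↑(Gamma u * Gamma v / Gamma (u + v)) := by
    rw [Complex.betaIntegral_eq_Gamma_mul_div _ _ (by simpa) (by simpa), ← Complex.ofReal_add]
    simp only [Complex.Gamma_ofReal]
    push_cast
    rfl
  rw [← hbeta, ← intervalIntegral.integral_ofReal, Complex.betaIntegral]
  refine intervalIntegral.integral_congr fun s hs => ?_
  rw [Set.uIcc_of_le zero_le_one] at hs
  push_cast [Complex.ofReal_cpow hs.1, Complex.ofReal_cpow (sub_nonneg.2 hs.2)]
  rfl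

theorem ascPochhammer_eval_mul_Gamma {z : ℝ} (hz : ∀ k : ℕ, z ≠ -k) (n : ℕ) :
    (ascPochhammer ℝ n).eval z * Gamma z = Gamma (z + n) := by
  induction n with
  | zero => simp
  | succ n ih =>
    have hzn : z + n ≠ 0 := fun h => hz n (by linarith)
    rw [ascPochhammer_succ_right, Polynomial.eval_mul, mul_right_comm, ih, Nat.cast_succ,
      ← add_assoc, Gamma_add_one hzn]
    simp [mul_comm]

theorem descPochhammer_eval_mul_Gamma {r : ℝ} {n : ℕ} (hr : ∀ k : ℕ, r - n + 1 ≠ -k) :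
    (descPochhammer ℝ n).eval r * Gamma (r - n + 1) = Gamma (r + 1) := by
  rw [descPochhammer_eval_eq_ascPochhammer, ascPochhammer_eval_mul_Gamma hr]
  ring_nf

end Real

theorem iteratedDeriv_sub_const_rpow (a p : ℝ) (n : ℕ) (x : ℝ) :
    iteratedDeriv n (fun y => (y - a) ^ p) x =
      (descPochhammer ℝ n).eval p * (x - a) ^ (p - n) := by
  rw [iteratedDeriv_comp_sub_const (f := fun y => y ^ p), iteratedDeriv_eq_iterate]
  exact Real.iter_deriv_rpow_const p (x - a) n

theorem integral_sub_rpow_mul_rpow_sub {a y : ℝ} (hay : a < y) (c β : ℝ) :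
    ∫ τ in a..y, (y - τ) ^ c * (τ - a) ^ β =
      (y - a) ^ (c + β + 1) * ∫ s in (0 : ℝ)..1, s ^ c * (1 - s) ^ β := by
  have hya : 0 < y - a := sub_pos.2 hay
  have hsub := intervalIntegral.integral_comp_sub_mul (fun τ => (y - τ) ^ c * (τ - a) ^ β)
    (a := 0) (b := 1) hya.ne' y
  simp only [mul_zero, sub_zero, mul_one, sub_sub_cancel, smul_eq_mul] at hsub
  rw [eq_inv_mul_iff_mul_eq₀ hya.ne'] at hsub
  rw [← hsub, ← intervalIntegral.integral_const_mul, ← intervalIntegral.integral_const_mul]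
  refine intervalIntegral.integral_congr fun s hs => ?_
  rw [Set.uIcc_of_le zero_le_one] at hs
  rw [show y - (y - a) * s - a = (y - a) * (1 - s) by ring, mul_rpow hya.le hs.1,
    mul_rpow hya.le (sub_nonneg.2 hs.2), rpow_add hya, rpow_add hya, rpow_one]
  ring

noncomputable def riemannLiouvilleIntegral (u a : ℝ) (f : ℝ → ℝ) (y : ℝ) : ℝ :=
  1 / Gamma u * ∫ τ in a..y, (y - τ) ^ (u - 1) * f τ

theorem riemannLiouvilleIntegral_sub_rpow {u a β y : ℝ} (hu : 0 < u) (hβ : -1 < β)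
    (hay : a < y) :
    riemannLiouvilleIntegral u a (fun τ => (τ - a) ^ β) y =
      Gamma (β + 1) / Gamma (u + β + 1) * (y - a) ^ (u + β) := by
  have hbeta := integral_rpow_mul_one_sub_rpow hu (v := β + 1) (by linarith)
  rw [add_sub_cancel_right, ← add_assoc] at hbeta
  rw [riemannLiouvilleIntegral, integral_sub_rpow_mul_rpow_sub hay, hbeta,
    show u - 1 + β + 1 = u + β by ring]
  have hΓu : Gamma u ≠ 0 := (Gamma_pos_of_pos hu).ne'
  field_simp

theorem rl_derivative_power (α : ℝ) (hα : 0 < α) (hαni : ∀ n : ℤ, α ≠ n)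
    (m : ℕ) (hm : m = ⌈α⌉₊) (a β : ℝ) (hβ : α - 1 < β) (x : ℝ) (hx : a < x) :
    iteratedDeriv m
      (fun y => (1 / Real.Gamma ((m : ℝ) - α)) *
        ∫ τ in a..y, (y - τ) ^ ((m : ℝ) - α - 1) * (τ - a) ^ β) x =
      (Real.Gamma (β + 1) / Real.Gamma (β - α + 1)) * (x - a) ^ (β - α) := by
  have hu : 0 < (m : ℝ) - α := sub_pos.2 <|
    (hm ▸ Nat.le_ceil α).lt_of_ne (by exact_mod_cast hαni m)
  have hpower : riemannLiouvilleIntegral ((m : ℝ) - α) a (fun τ => (τ - a) ^ β) =ᶠ[𝓝 x]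
      fun y => Gamma (β + 1) / Gamma ((m - α) + β + 1) * (y - a) ^ ((m - α) + β) := by
    filter_upwards [Ioi_mem_nhds hx] with y hy
    exact riemannLiouvilleIntegral_sub_rpow hu (by linarith) hy
  have hpoch := descPochhammer_eval_mul_Gamma (r := (m - α) + β) (n := m) fun k => by
    linarith [(k.cast_nonneg : (0 : ℝ) ≤ k)]
  have hexp : (m : ℝ) - α + β - m = β - α := by ring
  rw [hexp] at hpoch
  change iteratedDeriv m (riemannLiouvilleIntegral ((m : ℝ) - α) a (fun τ => (τ - a) ^ β)) x = _
  rw [hpower.iteratedDeriv_eq, iteratedDeriv_const_mul_field, iteratedDeriv_sub_const_rpow, hexp,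
    ← hpoch]
  have hΓ : Gamma (β - α + 1) ≠ 0 := (Gamma_pos_of_pos (by linarith)).ne'
  have hP : (descPochhammer ℝ m).eval ((m - α) + β) ≠ 0 :=
    left_ne_zero_of_mul (hpoch ▸ (Gamma_pos_of_pos (by linarith)).ne')
  field_simp
end

section
/- Let α > 0 be a non-integer real number, let m = ⌈α⌉, let a ∈ ℝ, and let β > m - 1 be a real number. Then for every x > a, the left-sided Caputo fractional derivative of order α of τ ↦ (τ - a)^β satisfies (1/Γ(m-α)) ∫_a^x (x - τ)^(m-α-1) · (Γ(β+1)/Γ(β-m+1)) (τ - a)^(β-m) dτ = (Γ(β+1)/Γ(β-α+1)) · (x - a)^(β-α), where Γ(β+1)/Γ(β-m+1) · (τ-a)^(β-m) is the m-th derivative of τ ↦ (τ-a)^β on (a, ∞). -/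
open MeasureTheory Real intervalIntegral

lemma real_beta {p q : ℝ} (hp : 0 < p) (hq : 0 < q) :
    ∫ s in (0:ℝ)..1, s ^ (q - 1) * (1 - s) ^ (p - 1) =
      Real.Gamma q * Real.Gamma p / Real.Gamma (q + p) := by
  have h := Complex.Gamma_mul_Gamma_eq_betaIntegral (s := (q:ℂ)) (t := (p:ℂ))
    (by simpa using hq) (by simpa using hp)
  have hB : Complex.betaIntegral q p =
      ((∫ s in (0:ℝ)..1, s ^ (q - 1) * (1 - s) ^ (p - 1) : ℝ) : ℂ) := by
    rw [Complex.betaIntegral, ← intervalIntegral.integral_ofReal]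
    refine intervalIntegral.integral_congr fun s hs => ?_
    rw [Set.uIcc_of_le zero_le_one] at hs
    rw [show ((q:ℂ)-1) = ((q-1:ℝ):ℂ) by push_cast; ring,
      show ((p:ℂ)-1) = ((p-1:ℝ):ℂ) by push_cast; ring,
      show (1 - (s:ℂ)) = ((1-s:ℝ):ℂ) by push_cast; ring,
      ← Complex.ofReal_cpow hs.1, ← Complex.ofReal_cpow (by linarith [hs.2]),
      ← Complex.ofReal_mul]
  rw [hB, ← Complex.ofReal_add, Complex.Gamma_ofReal, Complex.Gamma_ofReal,
    Complex.Gamma_ofReal, ← Complex.ofReal_mul, ← Complex.ofReal_mul] at h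
  have := Complex.ofReal_injective h
  have hG : Real.Gamma (q + p) ≠ 0 := (Real.Gamma_pos_of_pos (by linarith)).ne'
  field_simp
  linarith [this]

theorem caputo_derivative_power (α : ℝ) (hα : 0 < α) (hαni : ∀ n : ℤ, α ≠ n)
    (m : ℕ) (hm : m = ⌈α⌉₊) (a β : ℝ) (hβ : (m : ℝ) - 1 < β) (x : ℝ) (hx : a < x) :
    (1 / Real.Gamma ((m : ℝ) - α)) *
      ∫ τ in a..x, (x - τ) ^ ((m : ℝ) - α - 1) *
        ((Real.Gamma (β + 1) / Real.Gamma (β - m + 1)) * (τ - a) ^ (β - m)) =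
      (Real.Gamma (β + 1) / Real.Gamma (β - α + 1)) * (x - a) ^ (β - α) := by
  have hαm : α < m := by
    have h1 : α ≤ m := by rw [hm]; exact Nat.le_ceil α
    have h2 : α ≠ m := by simpa using hαni m
    exact lt_of_le_of_ne h1 h2
  set p : ℝ := (m : ℝ) - α with hpdef
  set q : ℝ := β - (m : ℝ) + 1 with hqdef
  have hp : 0 < p := by simp [hpdef]; linarith
  have hq : 0 < q := by simp [hqdef]; linarith
  have hxa : (0:ℝ) < x - a := by linarith
  -- substitution
  have hsub := intervalIntegral.integral_comp_mul_add
    (fun τ => (x - τ) ^ (p - 1) * (τ - a) ^ (q - 1)) (ne_of_gt hxa) a (a := 0) (b := 1)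
  simp only [mul_zero, zero_add, mul_one, sub_add_cancel] at hsub
  have hcongr : ∫ s in (0:ℝ)..1, (x - ((x - a) * s + a)) ^ (p - 1) * ((x - a) * s + a - a) ^ (q - 1)
      = ((x - a) ^ (p - 1) * (x - a) ^ (q - 1)) * ∫ s in (0:ℝ)..1, s ^ (q - 1) * (1 - s) ^ (p - 1) := by
    rw [← intervalIntegral.integral_const_mul]
    refine intervalIntegral.integral_congr fun s hs => ?_
    rw [Set.uIcc_of_le zero_le_one] at hs
    have h1 : x - ((x - a) * s + a) = (x - a) * (1 - s) := by ring
    have h2 : (x - a) * s + a - a = (x - a) * s := by ring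
    rw [h1, h2, Real.mul_rpow hxa.le (by linarith [hs.2]), Real.mul_rpow hxa.le hs.1]
    ring
  have key : (∫ τ in a..x, (x - τ) ^ (p - 1) * (τ - a) ^ (q - 1))
      = (x - a) ^ (p + q - 1) * ∫ s in (0:ℝ)..1, s ^ (q - 1) * (1 - s) ^ (p - 1) := by
    rw [hcongr] at hsub
    have h3 : (∫ τ in a..x, (x - τ) ^ (p - 1) * (τ - a) ^ (q - 1))
        = (x - a) • (((x - a) ^ (p - 1) * (x - a) ^ (q - 1)) * ∫ s in (0:ℝ)..1, s ^ (q - 1) * (1 - s) ^ (p - 1)) := by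
      rw [hsub, smul_smul, mul_inv_cancel₀ hxa.ne', one_smul]
    rw [h3, smul_eq_mul, ← mul_assoc]
    congr 1
    rw [← Real.rpow_add hxa]
    nth_rewrite 1 [← Real.rpow_one (x - a)]
    rw [← Real.rpow_add hxa]
    ring_nf
  have hexp1 : (m:ℝ) - α - 1 = p - 1 := by rw [hpdef]
  have hexp2 : β - (m:ℝ) = q - 1 := by rw [hqdef]; ring
  have hexp3 : β - (m:ℝ) + 1 = q := by rw [hqdef]
  have hexp4 : β - α + 1 = q + p := by rw [hqdef, hpdef]; ring
  have hexp5 : β - α = p + q - 1 := by rw [hqdef, hpdef]; ring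
  rw [hexp1, hexp2, hexp4, hexp5]
  have : ∫ τ in a..x, (x - τ) ^ (p - 1) * (Real.Gamma (β + 1) / Real.Gamma q * (τ - a) ^ (q - 1))
      = (Real.Gamma (β + 1) / Real.Gamma q) * ∫ τ in a..x, (x - τ) ^ (p - 1) * (τ - a) ^ (q - 1) := by
    rw [← intervalIntegral.integral_const_mul]
    refine intervalIntegral.integral_congr fun τ _ => by ring
  rw [this, key, real_beta hp hq]
  have hGp : Real.Gamma p ≠ 0 := (Real.Gamma_pos_of_pos hp).ne'
  have hGq : Real.Gamma q ≠ 0 := (Real.Gamma_pos_of_pos hq).ne'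
  have hGqp : Real.Gamma (q + p) ≠ 0 := (Real.Gamma_pos_of_pos (by linarith)).ne'
  field_simp
end

section
/- Let α > 0, let n ∈ ℕ, and let a < x be real numbers. Then the left-sided Riemann–Liouville fractional integral of order α of the power function τ ↦ τ^n satisfies (1/Γ(α)) ∫_a^x (x - τ)^(α-1) τ^n dτ = n! · (x - a)^α · Σ_{k=0}^{n} a^(n-k) (x - a)^k / ((n - k)! · Γ(α + k + 1)). -/
/-!
Substituting `τ = a + s` and expanding `(a + s) ^ n` binomially reduces the integral to a
combination of the Beta integrals `∫₀^c (c - s) ^ (α - 1) s ^ k = Γ(α) k! / Γ(α + k + 1) c ^ (α + k)`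
with `c = x - a`; the binomial coefficient `n.choose k` then combines with `k!` into `n! / (n - k)!`.
-/

open MeasureTheory Real

lemma intervalIntegrable_sub_rpow_mul {α : ℝ} (hα : 0 < α) {f : ℝ → ℝ} (hf : Continuous f)
    (b c : ℝ) : IntervalIntegrable (fun s => (c - s) ^ (α - 1) * f s) volume b c := by
  have h := (intervalIntegral.intervalIntegrable_rpow' (a := c - b) (b := c - c)
    (by linarith : -1 < α - 1)).comp_sub_left c
  simp only [sub_sub_cancel] at h
  exact h.mul_continuousOn hf.continuousOn

lemma integral_rpow_mul_sub_rpow {β γ c : ℝ} (hβ : 0 < β) (hγ : 0 < γ) (hc : 0 < c) :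
    ∫ s in 0..c, s ^ (β - 1) * (c - s) ^ (γ - 1) =
      Gamma β * Gamma γ / Gamma (β + γ) * c ^ (β + γ - 1) := by
  have hB := Complex.Gamma_mul_Gamma_eq_betaIntegral (s := β) (t := γ)
    (by simpa using hβ) (by simpa using hγ)
  have hΓ : Complex.Gamma (β + γ) ≠ 0 := by
    rw [← Complex.ofReal_add, Complex.Gamma_ofReal]
    exact_mod_cast (Gamma_pos_of_pos (add_pos hβ hγ)).ne'
  apply Complex.ofReal_injective
  rw [← intervalIntegral.integral_ofReal]
  calc ∫ s in 0..c, ((s ^ (β - 1) * (c - s) ^ (γ - 1) : ℝ) : ℂ)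
      = ∫ s in 0..c, (s : ℂ) ^ ((β : ℂ) - 1) * ((c : ℂ) - s) ^ ((γ : ℂ) - 1) := by
        refine intervalIntegral.integral_congr fun s hs => ?_
        rw [Set.uIcc_of_le hc.le] at hs
        push_cast
        rw [Complex.ofReal_cpow hs.1, Complex.ofReal_cpow (sub_nonneg.2 hs.2)]
        push_cast; rfl
    _ = (c : ℂ) ^ ((β : ℂ) + γ - 1) * Complex.betaIntegral β γ :=
        Complex.betaIntegral_scaled _ _ hc
    _ = _ := by
        rw [(eq_div_iff hΓ).2 (by rw [mul_comm, ← hB] : Complex.betaIntegral β γ * _ = _),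
          ← Complex.ofReal_add, Complex.Gamma_ofReal, Complex.Gamma_ofReal, Complex.Gamma_ofReal]
        push_cast [Complex.ofReal_cpow hc.le]
        ring

lemma integral_sub_rpow_mul_pow {α c : ℝ} (hα : 0 < α) (hc : 0 < c) (k : ℕ) :
    ∫ s in 0..c, (c - s) ^ (α - 1) * s ^ k =
      Gamma α * k.factorial / Gamma (α + k + 1) * c ^ (α + k) := by
  have h := integral_rpow_mul_sub_rpow (β := k + 1) (by positivity) hα hc
  rw [add_sub_cancel_right, Gamma_nat_eq_factorial, add_comm (k + 1 : ℝ) α,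
    ← add_assoc, add_sub_cancel_right] at h
  simp only [rpow_natCast] at h
  rw [mul_comm (Gamma α), ← h]
  congr 1 with s
  ring

lemma integral_sub_rpow_mul_pow_eq_sum {α : ℝ} (hα : 0 < α) (a x : ℝ) (n : ℕ) :
    ∫ τ in a..x, (x - τ) ^ (α - 1) * τ ^ n =
      ∑ k ∈ Finset.range (n + 1),
        n.choose k * a ^ (n - k) * ∫ s in 0..x - a, (x - a - s) ^ (α - 1) * s ^ k := by
  have hshift : ∫ τ in a..x, (x - τ) ^ (α - 1) * τ ^ n =
      ∫ s in 0..x - a, (x - a - s) ^ (α - 1) * (s + a) ^ n := by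
    have h := intervalIntegral.integral_comp_add_right
      (fun τ => (x - τ) ^ (α - 1) * τ ^ n) (a := 0) (b := x - a) a
    rw [zero_add, sub_add_cancel] at h
    simp only [← h, sub_add_eq_sub_sub_swap]
  have hexpand : ∀ s, (x - a - s) ^ (α - 1) * (s + a) ^ n = ∑ k ∈ Finset.range (n + 1),
      n.choose k * a ^ (n - k) * ((x - a - s) ^ (α - 1) * s ^ k) := fun s => by
    rw [add_pow, Finset.mul_sum]
    exact Finset.sum_congr rfl fun k _ => by ring
  simp_rw [hshift, hexpand, ← intervalIntegral.integral_const_mul]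
  exact intervalIntegral.integral_finsetSum fun k _ =>
    (intervalIntegrable_sub_rpow_mul hα (continuous_pow k) _ _).const_mul _

theorem rl_integral_monomial (α : ℝ) (hα : 0 < α) (n : ℕ) (a x : ℝ) (hax : a < x) :
    (1 / Real.Gamma α) * ∫ τ in a..x, (x - τ) ^ (α - 1) * τ ^ n =
      (n.factorial : ℝ) * (x - a) ^ α *
        ∑ k ∈ Finset.range (n + 1),
          a ^ (n - k) * (x - a) ^ k / ((n - k).factorial * Real.Gamma (α + k + 1)) := by
  have hc : 0 < x - a := sub_pos.2 hax
  rw [integral_sub_rpow_mul_pow_eq_sum hα, Finset.mul_sum, Finset.mul_sum]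
  refine Finset.sum_congr rfl fun k hk => ?_
  have hkn : k ≤ n := Nat.lt_succ_iff.1 (Finset.mem_range.1 hk)
  have hchoose : (n.choose k : ℝ) * k.factorial * (n - k).factorial = n.factorial := by
    exact_mod_cast Nat.choose_mul_factorial_mul_factorial hkn
  have hΓα := (Gamma_pos_of_pos hα).ne'
  have hΓ := (Gamma_pos_of_pos (show 0 < α + k + 1 by positivity)).ne'
  rw [integral_sub_rpow_mul_pow hα hc, rpow_add hc, rpow_natCast, ← hchoose]
  field_simp
end

section
/- Let α > 0 be a non-integer real number, let m = ⌈α⌉, let n ∈ ℕ with n ≥ m, and let a < x be real numbers. Then the left-sided Caputo fractional derivative of order α of the power function τ ↦ τ^n satisfies (1/Γ(m-α)) ∫_a^x (x - τ)^(m-α-1) · (n!/(n-m)!) τ^(n-m) dτ = n! · (x - a)^(m-α) · Σ_{k=0}^{n-m} a^(n-m-k) (x - a)^k / ((n - m - k)! · Γ(m - α + k + 1)), where (n!/(n-m)!) τ^(n-m) is the m-th derivative of τ ↦ τ^n. -/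
open MeasureTheory Real

lemma beta_nat_eval (β : ℝ) (hβ : 0 < β) (k : ℕ) :
    ∫ s in (0:ℝ)..1, s ^ k * (1 - s) ^ (β - 1) =
      k.factorial * Real.Gamma β / Real.Gamma (β + k + 1) := by
  have h := Complex.Gamma_mul_Gamma_eq_betaIntegral (s := ((k:ℂ) + 1)) (t := (β:ℂ))
    (by simp; positivity) (by simpa using hβ)
  have hB : Complex.betaIntegral ((k:ℂ)+1) (β:ℂ) =
      ((∫ s in (0:ℝ)..1, s ^ k * (1 - s) ^ (β - 1) : ℝ) : ℂ) := by
    rw [Complex.betaIntegral, ← intervalIntegral.integral_ofReal]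
    apply intervalIntegral.integral_congr
    intro s hs
    rw [Set.uIcc_of_le (by norm_num), Set.mem_Icc] at hs
    push_cast
    rw [Complex.ofReal_cpow (by linarith [hs.2])]
    push_cast
    rw [add_sub_cancel_right, Complex.cpow_natCast]
  rw [hB] at h
  have h1 : Complex.Gamma ((k:ℂ) + 1) = (k.factorial : ℂ) := by
    exact_mod_cast Complex.Gamma_nat_eq_factorial k
  have h2 : Complex.Gamma (β:ℂ) = (Real.Gamma β : ℂ) := Complex.Gamma_ofReal β
  have h3 : Complex.Gamma ((k:ℂ) + 1 + (β:ℂ)) = (Real.Gamma (β + k + 1) : ℂ) := by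
    rw [show ((k:ℂ) + 1 + (β:ℂ)) = ((β + k + 1 : ℝ) : ℂ) by push_cast; ring]
    exact Complex.Gamma_ofReal _
  rw [h1, h2, h3] at h
  have hG : Real.Gamma (β + k + 1) ≠ 0 := (Real.Gamma_pos_of_pos (by positivity)).ne'
  have : (k.factorial : ℝ) * Real.Gamma β =
      Real.Gamma (β + k + 1) * ∫ s in (0:ℝ)..1, s ^ k * (1 - s) ^ (β - 1) := by
    exact_mod_cast h
  field_simp
  linarith [this]

theorem caputo_derivative_monomial (α : ℝ) (hα : 0 < α) (hαni : ∀ j : ℤ, α ≠ j)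
    (m : ℕ) (hm : m = ⌈α⌉₊) (n : ℕ) (hnm : m ≤ n) (a x : ℝ) (hax : a < x) :
    (1 / Real.Gamma ((m : ℝ) - α)) *
      ∫ τ in a..x, (x - τ) ^ ((m : ℝ) - α - 1) *
        ((n.factorial / (n - m).factorial : ℝ) * τ ^ (n - m)) =
      (n.factorial : ℝ) * (x - a) ^ ((m : ℝ) - α) *
        ∑ k ∈ Finset.range (n - m + 1),
          a ^ (n - m - k) * (x - a) ^ k /
            ((n - m - k).factorial * Real.Gamma ((m : ℝ) - α + k + 1)) := by
  set β : ℝ := (m : ℝ) - α with hβdef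
  set c : ℝ := x - a with hcdef
  set p : ℕ := n - m with hpdef
  have hc : 0 < c := by simp [hcdef]; linarith
  have hβ : 0 < β := by
    have h1 : α ≤ (m : ℝ) := by rw [hm]; exact Nat.le_ceil α
    have h2 : α ≠ (m : ℝ) := by
      have := hαni (m : ℤ); simpa using this
    have : α < (m : ℝ) := lt_of_le_of_ne h1 h2
    simp [hβdef]; linarith
  have hΓβ : Real.Gamma β ≠ 0 := (Real.Gamma_pos_of_pos hβ).ne'
  -- pull out the constant
  have step1 : ∫ τ in a..x, (x - τ) ^ (β - 1) *
        ((n.factorial / p.factorial : ℝ) * τ ^ p) =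
      (n.factorial / p.factorial : ℝ) * ∫ τ in a..x, (x - τ) ^ (β - 1) * τ ^ p := by
    rw [← intervalIntegral.integral_const_mul]
    apply intervalIntegral.integral_congr
    intro τ _
    ring
  -- substitution τ = c * s + a
  have step2 : ∫ τ in a..x, (x - τ) ^ (β - 1) * τ ^ p =
      c • ∫ s in (0:ℝ)..1, (x - (c * s + a)) ^ (β - 1) * (c * s + a) ^ p := by
    rw [intervalIntegral.smul_integral_comp_mul_add
      (fun τ => (x - τ) ^ (β - 1) * τ ^ p) c a]
    norm_num [hcdef]
  -- rewrite integrand as a sum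
  have hint : ∀ k : ℕ, IntervalIntegrable
      (fun s : ℝ => s ^ k * (1 - s) ^ (β - 1)) volume 0 1 := by
    intro k
    have h1 : IntervalIntegrable (fun s : ℝ => ((1:ℝ) - s) ^ (β - 1)) volume 0 1 := by
      have := (intervalIntegral.intervalIntegrable_rpow' (a := 1) (b := 0)
        (show (-1:ℝ) < β - 1 by linarith)).comp_sub_left 1
      simpa using this
    have := h1.continuousOn_mul (g := fun s : ℝ => s ^ k)
      (by fun_prop)
    simpa using this
  have step3 : ∫ s in (0:ℝ)..1, (x - (c * s + a)) ^ (β - 1) * (c * s + a) ^ p =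
      ∑ k ∈ Finset.range (p + 1),
        (c ^ (β - 1) * (c ^ k * a ^ (p - k) * (p.choose k : ℝ))) *
          ∫ s in (0:ℝ)..1, s ^ k * (1 - s) ^ (β - 1) := by
    have hsum : ∫ s in (0:ℝ)..1, (x - (c * s + a)) ^ (β - 1) * (c * s + a) ^ p =
        ∫ s in (0:ℝ)..1, ∑ k ∈ Finset.range (p + 1),
          (c ^ (β - 1) * (c ^ k * a ^ (p - k) * (p.choose k : ℝ))) *
            (s ^ k * (1 - s) ^ (β - 1)) := by
      apply intervalIntegral.integral_congr
      intro s hs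
      rw [Set.uIcc_of_le (by norm_num), Set.mem_Icc] at hs
      dsimp only
      have hx : x - (c * s + a) = c * (1 - s) := by simp [hcdef]; ring
      rw [hx, Real.mul_rpow hc.le (by linarith [hs.2])]
      rw [add_pow (c * s) a p, Finset.mul_sum]
      apply Finset.sum_congr rfl
      intro k _
      rw [mul_pow]
      ring
    rw [hsum, intervalIntegral.integral_finset_sum]
    · apply Finset.sum_congr rfl
      intro k _
      rw [intervalIntegral.integral_const_mul]
    · intro k _
      exact (hint k).const_mul _
  rw [step1, step2, step3]
  rw [smul_eq_mul, Finset.mul_sum, Finset.mul_sum, Finset.mul_sum, Finset.mul_sum]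
  apply Finset.sum_congr rfl
  intro k hk
  rw [Finset.mem_range] at hk
  have hk' : k ≤ p := Nat.lt_succ_iff.mp hk
  rw [beta_nat_eval β hβ k]
  have hccc : c * c ^ (β - 1) = c ^ β := by
    rw [← Real.rpow_one_add' hc.le (by intro h; simp at h; linarith)]
    ring_nf
  have hfac : ((p.choose k : ℝ)) * k.factorial * (p - k).factorial = p.factorial := by
    exact_mod_cast Nat.choose_mul_factorial_mul_factorial hk'
  have hΓk : Real.Gamma (β + k + 1) ≠ 0 :=
    (Real.Gamma_pos_of_pos (by positivity)).ne'
  have hpf : (p.factorial : ℝ) ≠ 0 := by positivity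
  have hpkf : ((p - k).factorial : ℝ) ≠ 0 := by positivity
  have hCk : ((p.choose k : ℝ)) ≠ 0 := by
    exact_mod_cast (Nat.choose_pos hk').ne'
  have hkf : ((k.factorial : ℝ)) ≠ 0 := by positivity
  rw [← hccc, show (p.factorial:ℝ) = (p.choose k) * k.factorial * (p-k).factorial from hfac.symm]
  field_simp
end

section
/- Let α > 0, let n ∈ ℕ, and let x < b be real numbers. Then the right-sided Riemann–Liouville fractional integral of order α of the power function τ ↦ τ^n satisfies (1/Γ(α)) ∫_x^b (τ - x)^(α-1) τ^n dτ = n! · (b - x)^α · Σ_{k=0}^{n} b^(n-k) (x - b)^k / ((n - k)! · Γ(α + k + 1)). -/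
/-!
Expanding `τ ^ n = ((τ - b) + b) ^ n` binomially reduces the integral to the moments
`∫_x^b (τ - x)^(α-1) (τ - b)^k dτ`. The substitution `τ = x + (b - x) s` turns each of them
into `(b - x)^α (x - b)^k B(α, k + 1) = (b - x)^α (x - b)^k Γ(α) k! / Γ(α + k + 1)`, and the
`k!` cancels against the binomial coefficient.
-/

open MeasureTheory Real intervalIntegral

theorem integral_rpow_mul_one_sub_rpow {α β : ℝ} (hα : 0 < α) (hβ : 0 < β) :
    ∫ s in (0 : ℝ)..1, s ^ (α - 1) * (1 - s) ^ (β - 1) =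
      Gamma α * Gamma β / Gamma (α + β) := by
  have h := Complex.betaIntegral_eq_Gamma_mul_div α β (by simpa) (by simpa)
  rw [Complex.betaIntegral, ← Complex.ofReal_add, Complex.Gamma_ofReal, Complex.Gamma_ofReal,
    Complex.Gamma_ofReal] at h
  apply Complex.ofReal_injective
  rw [← integral_ofReal]
  push_cast
  rw [← h]
  refine integral_congr fun s hs => ?_
  rw [Set.uIcc_of_le zero_le_one] at hs
  simp only [Complex.ofReal_cpow hs.1, Complex.ofReal_cpow (sub_nonneg.2 hs.2)]
  push_cast
  rfl

theorem integral_rpow_mul_one_sub_pow {α : ℝ} (hα : 0 < α) (k : ℕ) :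
    ∫ s in (0 : ℝ)..1, s ^ (α - 1) * (1 - s) ^ k =
      Gamma α * k.factorial / Gamma (α + k + 1) := by
  have h := integral_rpow_mul_one_sub_rpow hα (β := k + 1) (by positivity)
  simpa only [add_sub_cancel_right, ← add_assoc, rpow_natCast, Gamma_nat_eq_factorial] using h

theorem integral_sub_rpow_mul_sub_pow {α x b : ℝ} (hα : 0 < α) (k : ℕ) (hxb : x ≤ b) :
    ∫ τ in x..b, (τ - x) ^ (α - 1) * (τ - b) ^ k =
      (b - x) ^ α * (x - b) ^ k * (Gamma α * k.factorial / Gamma (α + k + 1)) := by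
  have hsub := smul_integral_comp_mul_add
    (fun τ => (τ - x) ^ (α - 1) * (τ - b) ^ k) (b - x) x (a := 0) (b := 1)
  simp only [mul_zero, zero_add, mul_one, sub_add_cancel] at hsub
  have hrescale : ∀ s ∈ Set.uIcc (0 : ℝ) 1,
      ((b - x) * s + x - x) ^ (α - 1) * ((b - x) * s + x - b) ^ k =
        (b - x) ^ (α - 1) * (x - b) ^ k * (s ^ (α - 1) * (1 - s) ^ k) := by
    intro s hs
    rw [Set.uIcc_of_le zero_le_one] at hs
    rw [show (b - x) * s + x - x = (b - x) * s by ring,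
      show (b - x) * s + x - b = (x - b) * (1 - s) by ring,
      mul_rpow (sub_nonneg.2 hxb) hs.1, mul_pow]
    ring
  rw [← hsub, integral_congr hrescale, intervalIntegral.integral_const_mul,
    integral_rpow_mul_one_sub_pow hα, smul_eq_mul, ← mul_assoc, ← mul_assoc,
    ← rpow_one_add' (sub_nonneg.2 hxb) (by linarith), add_sub_cancel]

theorem intervalIntegrable_sub_rpow {r : ℝ} (hr : -1 < r) (x b : ℝ) :
    IntervalIntegrable (fun τ => (τ - x) ^ r) volume x b := by
  simpa using (intervalIntegrable_rpow' hr (a := 0) (b := b - x)).comp_sub_right x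

theorem integral_mul_pow_eq_sum_choose {w : ℝ → ℝ} {a b : ℝ}
    (hw : IntervalIntegrable w volume a b) (n : ℕ) (c : ℝ) :
    ∫ τ in a..b, w τ * τ ^ n =
      ∑ k ∈ Finset.range (n + 1),
        n.choose k * c ^ (n - k) * ∫ τ in a..b, w τ * (τ - c) ^ k := by
  have hexpand : ∀ τ, w τ * τ ^ n =
      ∑ k ∈ Finset.range (n + 1), n.choose k * c ^ (n - k) * (w τ * (τ - c) ^ k) := by
    intro τ
    rw [show τ = (τ - c) + c by ring, add_pow, Finset.mul_sum]
    simp only [sub_add_cancel]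
    exact Finset.sum_congr rfl fun k _ => by ring
  simp_rw [hexpand, ← intervalIntegral.integral_const_mul]
  exact integral_finsetSum fun k _ =>
    (hw.mul_continuousOn (by fun_prop)).const_mul _

theorem rl_right_integral_monomial (α : ℝ) (hα : 0 < α) (n : ℕ) (x b : ℝ) (hxb : x < b) :
    (1 / Real.Gamma α) * ∫ τ in x..b, (τ - x) ^ (α - 1) * τ ^ n =
      (n.factorial : ℝ) * (b - x) ^ α *
        ∑ k ∈ Finset.range (n + 1),
          b ^ (n - k) * (x - b) ^ k / ((n - k).factorial * Real.Gamma (α + k + 1)) := by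
  rw [integral_mul_pow_eq_sum_choose (intervalIntegrable_sub_rpow (by linarith) x b) n b,
    Finset.mul_sum, Finset.mul_sum]
  refine Finset.sum_congr rfl fun k hk => ?_
  have hkn : k ≤ n := Nat.lt_succ_iff.mp (Finset.mem_range.mp hk)
  have hΓα : Gamma α ≠ 0 := (Gamma_pos_of_pos hα).ne'
  have hΓ : Gamma (α + k + 1) ≠ 0 := (Gamma_pos_of_pos (by positivity)).ne'
  rw [integral_sub_rpow_mul_sub_pow hα k hxb.le, Nat.cast_choose ℝ hkn]
  field_simp
end
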